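/- arXiv:1811.06188 — 2 statements merged into one kernel-verified Lean document; each statement's English description precedes it below -/
import Mathlib

section
/- If λ = (x_1, …, x_n) ∈ ℤ^n is dominant, i.e. x_1 ≥ x_2 ≥ ⋯ ≥ x_n ≥ 0, then w_λ lies in the submonoid of Br_extg generated by ω together with all the f_i, i ∈ ℤ/nℤ. If λ is antidominant, i.e. x_1 ≤ x_2 ≤ ⋯ ≤ x_n ≤ 0, then w_λ lies in the submonoid of Br_extg generated by ω^{−1} together with all the f_i^{−1}, i ∈ ℤ/nℤ. -/
/-- Generators of the cylindrical braid group: `f i` for `i ∈ ℤ/nℤ`, and `ω`. -/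
inductive ExtGen (n : ℕ) : Type
  | f : ZMod n → ExtGen n
  | om : ExtGen n

open FreeGroup in
/-- The defining relations of the cylindrical braid group `Br_extg`:
`f_i f_{i+1} f_i = f_{i+1} f_i f_{i+1}` (imposed only when `n ≥ 3`),
`f_i f_j = f_j f_i` for `j ∉ {i−1, i, i+1}`, and `ω f_i ω⁻¹ = f_{i+1}`. -/
def extRels (n : ℕ) : Set (FreeGroup (ExtGen n)) :=
  {r | (∃ i : ZMod n, 3 ≤ n ∧
          r = of (ExtGen.f i) * of (ExtGen.f (i + 1)) * of (ExtGen.f i) *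
              (of (ExtGen.f (i + 1)) * of (ExtGen.f i) * of (ExtGen.f (i + 1)))⁻¹) ∨
       (∃ i j : ZMod n, j ≠ i - 1 ∧ j ≠ i ∧ j ≠ i + 1 ∧
          r = of (ExtGen.f i) * of (ExtGen.f j) * (of (ExtGen.f j) * of (ExtGen.f i))⁻¹) ∨
       (∃ i : ZMod n,
          r = of ExtGen.om * of (ExtGen.f i) * (of ExtGen.om)⁻¹ * (of (ExtGen.f (i + 1)))⁻¹)}

/-- The cylindrical braid group `Br_extg`. -/
abbrev BrExt (n : ℕ) : Type := PresentedGroup (extRels n)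

/-- The generator `f_i` of `Br_extg`. -/
def fB (n : ℕ) (i : ZMod n) : BrExt n := PresentedGroup.of (ExtGen.f i)

/-- The generator `ω` of `Br_extg`. -/
def omB (n : ℕ) : BrExt n := PresentedGroup.of ExtGen.om

/-- `y_i = f_{i−1}⁻¹ ⋯ f_2⁻¹ f_1⁻¹ · ω · f_{n−1} f_{n−2} ⋯ f_{i+1} f_i`, for `1 ≤ i ≤ n`. -/
def yB (n : ℕ) (i : ℕ) : BrExt n :=
  (((List.range (i - 1)).reverse.map (fun k => (fB n ((k + 1 : ℕ) : ZMod n))⁻¹)).prod)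
    * omB n *
  (((List.range (n - i)).map (fun k => fB n ((n - 1 - k : ℕ) : ZMod n))).prod)

/-- `w_λ = y_1^{x_1} y_2^{x_2} ⋯ y_n^{x_n}` for `λ = (x_1, …, x_n) ∈ ℤ^n`. -/
def wB (n : ℕ) (lam : Fin n → ℤ) : BrExt n :=
  (List.ofFn (fun k : Fin n => yB n ((k : ℕ) + 1) ^ lam k)).prod

/-!
The `y_i` commute pairwise: `y_{i+1} = f_i⁻¹ y_i f_i⁻¹`, the generator `f_j` commutes with `y_i`
for `j > i`, and `f_i` commutes with `y_i y_{i+1}`. Hence `λ ↦ w_λ` is a homomorphism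
`ℤⁿ → Br_extg`. A dominant `λ` is a sum of fundamental weights `(1, …, 1, 0, …, 0)`, and the
fundamental weight with `k` ones goes to `y_1 ⋯ y_k = (ω f_{n-1} ⋯ f_k)^k`, a positive braid.
Antidominant weights are negatives of dominant ones, and `w_{-λ} = w_λ⁻¹`.
-/

section WordProducts

variable {M : Type*} [Monoid M]

def ascProd (g : ℕ → M) (a k : ℕ) : M := ((List.range' a k).map g).prod

def descProd (g : ℕ → M) (a k : ℕ) : M := ((List.range' a k).reverse.map g).prod

variable {g : ℕ → M}

theorem ascProd_add (a k l : ℕ) :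
    ascProd g a (k + l) = ascProd g a k * ascProd g (a + k) l := by
  simp only [ascProd, ← List.range'_append_1, List.map_append, List.prod_append]

theorem descProd_add (a k l : ℕ) :
    descProd g a (k + l) = descProd g (a + k) l * descProd g a k := by
  simp only [descProd, ← List.range'_append_1, List.reverse_append, List.map_append,
    List.prod_append]

@[simp] theorem ascProd_one (a : ℕ) : ascProd g a 1 = g a := by simp [ascProd]

@[simp] theorem descProd_one (a : ℕ) : descProd g a 1 = g a := by simp [descProd]

theorem ascProd_succ (a k : ℕ) : ascProd g a (k + 1) = ascProd g a k * g (a + k) := by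
  rw [ascProd_add, ascProd_one]

theorem ascProd_succ' (a k : ℕ) : ascProd g a (k + 1) = g a * ascProd g (a + 1) k := by
  rw [add_comm, ascProd_add, ascProd_one]

theorem descProd_succ (a k : ℕ) : descProd g a (k + 1) = g (a + k) * descProd g a k := by
  rw [descProd_add, descProd_one]

theorem descProd_succ' (a k : ℕ) : descProd g a (k + 1) = descProd g (a + 1) k * g a := by
  rw [add_comm, descProd_add, descProd_one]

theorem commute_ascProd {x : M} {a k : ℕ} (h : ∀ m, a ≤ m → m < a + k → Commute x (g m)) :
    Commute x (ascProd g a k) :=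
  Commute.list_prod_right _ _ <| List.forall_mem_map.2 fun m hm =>
    h m (List.mem_range'_1.1 hm).1 (List.mem_range'_1.1 hm).2

theorem commute_descProd {x : M} {a k : ℕ} (h : ∀ m, a ≤ m → m < a + k → Commute x (g m)) :
    Commute x (descProd g a k) :=
  Commute.list_prod_right _ _ <| List.forall_mem_map.2 fun m hm =>
    have hm := List.mem_range'_1.1 (List.mem_reverse.1 hm)
    h m hm.1 hm.2

theorem semiconjBy_ascProd {x : M} {a k : ℕ}
    (h : ∀ m, a ≤ m → m < a + k → SemiconjBy x (g m) (g (m + 1))) :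
    SemiconjBy x (ascProd g a k) (ascProd g (a + 1) k) := by
  induction k generalizing a with
  | zero => exact SemiconjBy.one_right x
  | succ k ih =>
    rw [ascProd_succ', ascProd_succ']
    exact (h a le_rfl (by omega)).mul_right (ih fun m h₁ h₂ => h m (by omega) (by omega))

theorem semiconjBy_descProd {x : M} {a k : ℕ}
    (h : ∀ m, a ≤ m → m < a + k → SemiconjBy x (g m) (g (m + 1))) :
    SemiconjBy x (descProd g a k) (descProd g (a + 1) k) := by
  induction k generalizing a with
  | zero => exact SemiconjBy.one_right x
  | succ k ih =>
    rw [descProd_succ', descProd_succ']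
    exact (ih fun m h₁ h₂ => h m (by omega) (by omega)).mul_right (h a le_rfl (by omega))

theorem mul_pow_eq_pow_mul_ascProd {t : M} {a j : ℕ}
    (h : ∀ m, a < m → m < a + j → SemiconjBy t (g m) (g (m + 1))) :
    (t * g (a + j)) ^ j = t ^ j * ascProd g (a + 1) j := by
  induction j generalizing a with
  | zero => simp [ascProd]
  | succ j ih =>
    have hshift : SemiconjBy t (ascProd g (a + 1) j) (ascProd g (a + 2) j) :=
      semiconjBy_ascProd fun m h₁ h₂ => h m (by omega) (by omega)
    rw [pow_succ, show a + (j + 1) = a + 1 + j by omega,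
      ih fun m h₁ h₂ => h m (by omega) (by omega), mul_assoc, ← mul_assoc _ t, ← hshift.eq,
      ascProd_succ, pow_succ]
    simp only [mul_assoc]

end WordProducts

theorem prod_ofFn_zpow_add {G : Type*} [Group G] {n : ℕ} {g : Fin n → G}
    (hg : ∀ i j, Commute (g i) (g j)) (a b : Fin n → ℤ) :
    (List.ofFn fun i => g i ^ (a i + b i)).prod =
      (List.ofFn fun i => g i ^ a i).prod * (List.ofFn fun i => g i ^ b i).prod := by
  have hcomm : Pairwise fun i j =>
      ∀ x y, Commute (zpowersHom G (g i) x) (zpowersHom G (g j) y) :=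
    fun i j _ x y => (hg i j).zpow_zpow _ _
  have hΦ (c : Fin n → ℤ) : MonoidHom.noncommPiCoprod _ hcomm (fun i => .ofAdd (c i)) =
      (List.ofFn fun i => g i ^ c i).prod := by
    simp [MonoidHom.noncommPiCoprod_apply, Finset.noncommProd, Fin.univ_val_map]
  rw [← hΦ, ← hΦ, ← hΦ]
  exact map_mul _ _ _

theorem prod_ofFn_ite_lt {M : Type*} [Monoid M] (h : ℕ → M) {m n : ℕ} (hmn : m ≤ n) :
    (List.ofFn fun k : Fin n => if (k : ℕ) < m then h k else 1).prod =
      ((List.range m).map h).prod := by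
  induction n generalizing m with
  | zero =>
    obtain rfl : m = 0 := by omega
    rfl
  | succ n ih =>
    rw [List.ofFn_succ', List.prod_concat]
    rcases hmn.eq_or_lt with rfl | hlt
    · have := ih (m := n) le_rfl
      simp_all [List.range_succ]
    · simpa [show ¬ n < m by omega] using ih (by omega)

section FundamentalWeights

variable {n : ℕ}

def fundamentalWeight (i : Fin n) : Fin n → ℤ := fun k => if k ≤ i then 1 else 0

theorem antitone_sub_fundamentalWeight {lam : Fin n → ℤ} (hanti : Antitone lam) {i : Fin n}
    (hi : 0 < lam i) (hzero : ∀ k, i < k → lam k = 0) :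
    Antitone (lam - fundamentalWeight i) := by
  intro j k hjk
  simp only [Pi.sub_apply, fundamentalWeight]
  split_ifs with hk hj hj
  · linarith [hanti hjk]
  · exact absurd (hjk.trans hk) hj
  · linarith [hzero k (not_le.1 hk), hi.trans_le (hanti hj)]
  · linarith [hanti hjk]

theorem mem_closure_fundamentalWeight_of_antitone {lam : Fin n → ℤ} (hanti : Antitone lam)
    (hpos : ∀ k, 0 ≤ lam k) :
    lam ∈ AddSubmonoid.closure (Set.range (fundamentalWeight (n := n))) := by
  obtain ⟨N, hN⟩ : ∃ N : ℕ, ∀ k, lam k ≤ N :=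
    let ⟨N, hN⟩ := Finite.exists_le lam
    ⟨N.toNat, fun k => (hN k).trans (Int.self_le_toNat N)⟩
  induction N generalizing lam with
  | zero =>
    convert (AddSubmonoid.closure _).zero_mem
    exact funext fun k => le_antisymm (by simpa using hN k) (hpos k)
  | succ N ih =>
    by_cases hz : ∀ k, lam k ≤ 0
    · convert (AddSubmonoid.closure _).zero_mem
      exact funext fun k => le_antisymm (hz k) (hpos k)
    -- peel off the fundamental weight of the support of `lam`, an initial segment `k ≤ i`
    simp only [not_forall, not_le] at hz
    obtain ⟨i, hi, hmax⟩ := (Finset.univ.filter fun k => 0 < lam k).exists_max_image id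
      (by simpa [Finset.Nonempty] using hz)
    simp only [Finset.mem_filter, Finset.mem_univ, true_and, id] at hi hmax
    have hzero : ∀ k, i < k → lam k = 0 := fun k hk =>
      le_antisymm (not_lt.1 fun h => (hmax k h).not_gt hk) (hpos k)
    rw [← sub_add_cancel lam (fundamentalWeight i)]
    refine add_mem (ih (antitone_sub_fundamentalWeight hanti hi hzero) (fun k => ?_) (fun k => ?_))
      (AddSubmonoid.subset_closure ⟨i, rfl⟩)
    all_goals
      simp only [Pi.sub_apply, fundamentalWeight]
      split_ifs with hk
      · have := hi.trans_le (hanti hk)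
        have := hN k
        push_cast at this ⊢
        omega
      · rw [hzero k (not_le.1 hk)]
        positivity

end FundamentalWeights

namespace BrExt

variable {n : ℕ}

theorem fB_braid (h : 3 ≤ n) (i : ZMod n) :
    fB n i * fB n (i + 1) * fB n i = fB n (i + 1) * fB n i * fB n (i + 1) :=
  PresentedGroup.mk_eq_mk_of_mul_inv_mem (Or.inl ⟨i, h, rfl⟩)

theorem fB_commute {i j : ZMod n} (h₁ : j ≠ i - 1) (h₂ : j ≠ i) (h₃ : j ≠ i + 1) :
    Commute (fB n i) (fB n j) :=
  PresentedGroup.mk_eq_mk_of_mul_inv_mem (Or.inr (Or.inl ⟨i, j, h₁, h₂, h₃, rfl⟩))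

theorem semiconjBy_omB_fB (i : ZMod n) : SemiconjBy (omB n) (fB n i) (fB n (i + 1)) :=
  mul_inv_eq_iff_eq_mul.mp <|
    PresentedGroup.mk_eq_mk_of_mul_inv_mem (Or.inr (Or.inr ⟨i, rfl⟩))

def fNat (n m : ℕ) : BrExt n := fB n m

theorem fNat_add_self (m : ℕ) : fNat n (m + n) = fNat n m := by
  simp [fNat]

theorem fNat_braid (h : 3 ≤ n) (m : ℕ) :
    fNat n m * fNat n (m + 1) * fNat n m = fNat n (m + 1) * fNat n m * fNat n (m + 1) := by
  simpa [fNat] using fB_braid h m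

theorem fNat_commute {a b : ℕ} (ha : 1 ≤ a) (hab : a + 2 ≤ b) (hb : b < n) :
    Commute (fNat n a) (fNat n b) := by
  have cast_ne : ∀ c < n, c ≠ b → (b : ZMod n) ≠ c := fun c hc hcb h => hcb <| by
    rwa [ZMod.natCast_eq_natCast_iff', Nat.mod_eq_of_lt hc, Nat.mod_eq_of_lt hb, eq_comm] at h
  refine fB_commute ?_ (cast_ne a (by omega) (by omega)) ?_
  · rw [← Nat.cast_pred ha]; exact cast_ne _ (by omega) (by omega)
  · rw [← Nat.cast_succ]; exact cast_ne _ (by omega) (by omega)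

theorem semiconjBy_omB_fNat (m : ℕ) : SemiconjBy (omB n) (fNat n m) (fNat n (m + 1)) := by
  simpa [fNat] using semiconjBy_omB_fB (n := n) m

theorem semiconjBy_omB_ascProd (a k : ℕ) :
    SemiconjBy (omB n) (ascProd (fNat n) a k) (ascProd (fNat n) (a + 1) k) :=
  semiconjBy_ascProd fun m _ _ => semiconjBy_omB_fNat m

theorem semiconjBy_omB_descProd (a k : ℕ) :
    SemiconjBy (omB n) (descProd (fNat n) a k) (descProd (fNat n) (a + 1) k) :=
  semiconjBy_descProd fun m _ _ => semiconjBy_omB_fNat m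

theorem ascProd_semiconjBy_fNat {a k m : ℕ} (ha : 1 ≤ a) (ham : a ≤ m) (hmk : m + 2 ≤ a + k)
    (hkn : a + k ≤ n) :
    SemiconjBy (ascProd (fNat n) a k) (fNat n m) (fNat n (m + 1)) := by
  obtain ⟨p, rfl⟩ := Nat.exists_eq_add_of_le ham
  obtain ⟨q, rfl⟩ : ∃ q, k = p + 2 + q := ⟨k - (p + 2), by omega⟩
  rw [ascProd_add, ascProd_add, ascProd_succ, ascProd_one]
  have below : Commute (ascProd (fNat n) a p) (fNat n (a + p + 1)) :=
    (commute_ascProd fun j _ _ => (fNat_commute (by omega) (by omega) (by omega)).symm).symm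
  have braid : SemiconjBy (fNat n (a + p) * fNat n (a + p + 1)) (fNat n (a + p))
      (fNat n (a + p + 1)) := by
    rw [SemiconjBy, fNat_braid (by omega), mul_assoc]
  have above : Commute (ascProd (fNat n) (a + (p + 2)) q) (fNat n (a + p)) :=
    (commute_ascProd fun j _ _ => fNat_commute (by omega) (by omega) (by omega)).symm
  exact (SemiconjBy.mul_left below braid).mul_left above

theorem descProd_semiconjBy_fNat {a k m : ℕ} (ha : 1 ≤ a) (ham : a ≤ m) (hmk : m + 2 ≤ a + k)
    (hkn : a + k ≤ n) :
    SemiconjBy (descProd (fNat n) a k) (fNat n (m + 1)) (fNat n m) := by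
  obtain ⟨p, rfl⟩ := Nat.exists_eq_add_of_le ham
  obtain ⟨q, rfl⟩ : ∃ q, k = p + 2 + q := ⟨k - (p + 2), by omega⟩
  rw [descProd_add, descProd_add, descProd_succ, descProd_one]
  have above : Commute (descProd (fNat n) (a + (p + 2)) q) (fNat n (a + p)) :=
    (commute_descProd fun j _ _ => fNat_commute (by omega) (by omega) (by omega)).symm
  have braid : SemiconjBy (fNat n (a + p + 1) * fNat n (a + p)) (fNat n (a + p + 1))
      (fNat n (a + p)) := by
    rw [SemiconjBy, ← fNat_braid (by omega), mul_assoc]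
  have below : Commute (descProd (fNat n) a p) (fNat n (a + p + 1)) :=
    (commute_descProd fun j _ _ => (fNat_commute (by omega) (by omega) (by omega)).symm).symm
  exact SemiconjBy.mul_left above (braid.mul_left below)

theorem yB_succ_eq (j : ℕ) :
    yB n (j + 1) =
      (ascProd (fNat n) 1 j)⁻¹ * omB n * descProd (fNat n) (j + 1) (n - (j + 1)) := by
  unfold yB ascProd descProd
  rw [Nat.add_sub_cancel, List.prod_inv_reverse, List.range'_eq_map_range, List.reverse_range']
  congr 2
  · simp [Function.comp_def, fNat, add_comm]
  · rw [List.map_map]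
    refine List.map_congr_left fun k hk => ?_
    simp only [fNat, Function.comp_apply]
    congr 2
    grind

theorem yB_add_two {j : ℕ} (hj : j + 2 ≤ n) :
    yB n (j + 2) = (fNat n (j + 1))⁻¹ * yB n (j + 1) * (fNat n (j + 1))⁻¹ := by
  obtain ⟨r, hr⟩ : ∃ r, n - (j + 1) = r + 1 := ⟨n - (j + 2), by omega⟩
  rw [yB_succ_eq, yB_succ_eq, hr, descProd_succ', ascProd_succ, add_comm 1 j,
    show n - (j + 1 + 1) = r by omega]
  group

theorem commute_fNat_yB {j l : ℕ} (hjl : j < l) (hl : l + 1 < n) :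
    Commute (fNat n (l + 1)) (yB n (j + 1)) := by
  rw [yB_succ_eq]
  have hA : Commute (fNat n (l + 1)) (ascProd (fNat n) 1 j) :=
    commute_ascProd fun m _ _ => (fNat_commute (by omega) (by omega) hl).symm
  have hD : SemiconjBy (descProd (fNat n) (j + 1) (n - (j + 1))) (fNat n (l + 1)) (fNat n l) :=
    descProd_semiconjBy_fNat (by omega) (by omega) (by omega) (by omega)
  exact ((SemiconjBy.mul_left hA.symm.inv_left (semiconjBy_omB_fNat l)).mul_left hD).symm

theorem yB_succ_mul_yB_add_two {j : ℕ} (hj : j + 2 ≤ n) :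
    yB n (j + 1) * yB n (j + 2) =
      (ascProd (fNat n) 1 j)⁻¹ * (ascProd (fNat n) 2 j)⁻¹ * (omB n * omB n) *
        (descProd (fNat n) (j + 1) (n - (j + 2)) * descProd (fNat n) (j + 2) (n - (j + 2))) := by
  generalize hr : n - (j + 2) = r
  have hDA : Commute (descProd (fNat n) (j + 1 + 1) r) (ascProd (fNat n) 1 j) :=
    commute_ascProd fun m _ _ =>
      (commute_descProd fun m' _ _ => fNat_commute (by omega) (by omega) (by omega)).symm
  rw [show j + 2 = j + 1 + 1 from rfl, yB_succ_eq, yB_succ_eq (j + 1),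
    show n - (j + 1) = r + 1 by omega, descProd_succ', ascProd_succ, hr, add_comm 1 j]
  simp only [mul_assoc, mul_inv_rev, mul_inv_cancel_left]
  rw [hDA.inv_right.left_comm, ← mul_assoc (omB n), (semiconjBy_omB_ascProd 1 j).inv_right.eq,
    ← mul_assoc (descProd _ _ _) (omB n), ← (semiconjBy_omB_descProd (j + 1) r).eq]
  simp only [mul_assoc]

/-- Read from right to left, the three factors of `yB_succ_mul_yB_add_two` conjugate `f_{j+1}`
to `f_{n-1}`, then to `f_1`, then back to `f_{j+1}`. -/
theorem commute_fNat_yB_mul_yB {j : ℕ} (hj : j + 2 ≤ n) :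
    Commute (fNat n (j + 1)) (yB n (j + 1) * yB n (j + 2)) := by
  rw [yB_succ_mul_yB_add_two hj]
  generalize hr : n - (j + 2) = r
  have hA : SemiconjBy ((ascProd (fNat n) 1 j)⁻¹ * (ascProd (fNat n) (1 + 1) j)⁻¹)
      (fNat n 1) (fNat n (j + 1)) := by
    have hslide : SemiconjBy (ascProd (fNat n) 1 (j + 1)) (ascProd (fNat n) 1 j)
        (ascProd (fNat n) (1 + 1) j) :=
      semiconjBy_ascProd fun m _ _ =>
        ascProd_semiconjBy_fNat le_rfl (by omega) (by omega) (by omega)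
    rw [← mul_inv_rev]
    refine SemiconjBy.inv_symm_left ?_
    rw [SemiconjBy, mul_assoc, add_comm j 1, ← ascProd_succ, ← mul_assoc, ← ascProd_succ',
      hslide.eq]
  have hω : SemiconjBy (omB n * omB n) (fNat n (n - 1)) (fNat n 1) := by
    have h := (semiconjBy_omB_fNat (n := n) (n - 1 + 1)).mul_left (semiconjBy_omB_fNat (n - 1))
    rwa [show n - 1 + 1 + 1 = 1 + n by omega, fNat_add_self] at h
  have hD : SemiconjBy (descProd (fNat n) (j + 1) r * descProd (fNat n) (j + 1 + 1) r)
      (fNat n (j + 1)) (fNat n (n - 1)) := by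
    have hslide : SemiconjBy (descProd (fNat n) (j + 1) (r + 1))
        (descProd (fNat n) (j + 1 + 1) r) (descProd (fNat n) (j + 1) r) :=
      SemiconjBy.inv_symm_left_iff.mp <| semiconjBy_descProd fun m _ _ =>
        (descProd_semiconjBy_fNat (by omega) (by omega) (by omega) (by omega)).inv_symm_left
    rw [SemiconjBy, mul_assoc, ← descProd_succ', ← mul_assoc, show n - 1 = j + 1 + r by omega,
      ← descProd_succ, hslide.eq]
  exact ((hA.mul_left hω).mul_left hD).symm

theorem commute_yB_succ {j : ℕ} (hj : j + 2 ≤ n) :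
    Commute (yB n (j + 1)) (yB n (j + 2)) := by
  have hconj : yB n (j + 2) * yB n (j + 1) =
      (fNat n (j + 1))⁻¹ * (yB n (j + 1) * yB n (j + 2)) * fNat n (j + 1) := by
    rw [yB_add_two hj]
    group
  rw [Commute, SemiconjBy, hconj, mul_assoc, ← (commute_fNat_yB_mul_yB hj).eq,
    inv_mul_cancel_left]

theorem commute_yB {i j : ℕ} (hi : 1 ≤ i) (hj : 1 ≤ j) (hin : i ≤ n) (hjn : j ≤ n) :
    Commute (yB n i) (yB n j) := by
  wlog hij : i ≤ j generalizing i j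
  · exact (this hj hi hjn hin (by omega)).symm
  obtain ⟨i, rfl⟩ := Nat.exists_eq_add_of_le' hi
  induction j, hij using Nat.le_induction with
  | base => exact Commute.refl _
  | succ j hij ih =>
    rcases hij.eq_or_lt with rfl | hlt
    · exact commute_yB_succ hjn
    obtain ⟨l, rfl⟩ := Nat.exists_eq_add_of_le' (show 1 ≤ j by omega)
    have hf : Commute (yB n (i + 1)) (fNat n (l + 1))⁻¹ :=
      (commute_fNat_yB (by omega) (by omega)).symm.inv_right
    rw [yB_add_two hjn]
    exact (hf.mul_right (ih (by omega) (by omega))).mul_right hf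

def tau (n k : ℕ) : BrExt n := omB n * descProd (fNat n) k (n - k)

theorem tau_eq_tau_succ_mul {k : ℕ} (hk : k < n) : tau n k = tau n (k + 1) * fNat n k := by
  obtain ⟨r, hr⟩ : ∃ r, n - k = r + 1 := ⟨n - (k + 1), by omega⟩
  rw [tau, tau, hr, descProd_succ', show n - (k + 1) = r by omega, mul_assoc]

theorem tau_semiconjBy_fNat {k m : ℕ} (hm : 1 ≤ m) (hmk : m + 2 ≤ k) :
    SemiconjBy (tau n k) (fNat n m) (fNat n (m + 1)) := by
  have hD : Commute (fNat n m) (descProd (fNat n) k (n - k)) :=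
    commute_descProd fun _ _ _ => fNat_commute hm (by omega) (by omega)
  exact (semiconjBy_omB_fNat m).mul_left hD.symm

theorem prod_yB_eq_tau_pow {k : ℕ} (hk : k ≤ n) :
    ((List.range k).map fun j => yB n (j + 1)).prod = tau n k ^ k := by
  induction k with
  | zero => simp
  | succ k ih =>
    have hpow := mul_pow_eq_pow_mul_ascProd (t := tau n (k + 1)) (g := fNat n) (a := 0) (j := k)
      fun m _ _ => tau_semiconjBy_fNat (by omega) (by omega)
    rw [zero_add, zero_add] at hpow
    rw [List.range_succ, List.map_append, List.prod_append, ih (by omega), List.map_singleton,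
      List.prod_singleton, yB_succ_eq, tau_eq_tau_succ_mul (by omega), hpow, mul_assoc _ (omB n),
      ← tau, ← mul_assoc, mul_inv_cancel_right, ← pow_succ]

theorem tau_mem_closure (k : ℕ) : tau n k ∈ Submonoid.closure ({omB n} ∪ Set.range (fB n)) :=
  mul_mem (Submonoid.subset_closure (Or.inl rfl)) <| Submonoid.list_prod_mem _ <|
    List.forall_mem_map.2 fun m _ => Submonoid.subset_closure (Or.inr ⟨m, rfl⟩)

theorem wB_add (lam mu : Fin n → ℤ) : wB n (lam + mu) = wB n lam * wB n mu :=
  prod_ofFn_zpow_add (fun i j => commute_yB (by omega) (by omega) i.2 j.2) lam mu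

theorem wB_neg (lam : Fin n → ℤ) : wB n (-lam) = (wB n lam)⁻¹ :=
  eq_inv_of_mul_eq_one_left <| by rw [← wB_add, neg_add_cancel]; simp [wB]

theorem wB_fundamentalWeight (i : Fin n) :
    wB n (fundamentalWeight i) = tau n (i + 1) ^ ((i : ℕ) + 1) := by
  rw [← prod_yB_eq_tau_pow (k := (i : ℕ) + 1) i.2, ← prod_ofFn_ite_lt _ i.2, wB]
  congr 2
  funext k
  simp only [fundamentalWeight, Fin.le_def, Nat.lt_succ_iff]
  split_ifs <;> simp

theorem wB_mem_closure_of_antitone {lam : Fin n → ℤ} (hanti : Antitone lam)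
    (hpos : ∀ k, 0 ≤ lam k) : wB n lam ∈ Submonoid.closure ({omB n} ∪ Set.range (fB n)) := by
  have hlam := mem_closure_fundamentalWeight_of_antitone hanti hpos
  clear hanti hpos
  induction hlam using AddSubmonoid.closure_induction with
  | mem _ h =>
    obtain ⟨i, rfl⟩ := h
    rw [wB_fundamentalWeight]
    exact pow_mem (tau_mem_closure _) _
  | zero => simp [wB]
  | add _ _ _ _ h₁ h₂ => rw [wB_add]; exact mul_mem h₁ h₂

end BrExt

theorem statement_9_general (n : ℕ) (lam : Fin n → ℤ) :
    -- dominant `λ` (i.e. `x_1 ≥ x_2 ≥ ⋯ ≥ x_n ≥ 0`): `w_λ` is a positive braid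
    ((∀ i j : Fin n, i ≤ j → lam j ≤ lam i) → (∀ i : Fin n, 0 ≤ lam i) →
      wB n lam ∈ Submonoid.closure ({omB n} ∪ Set.range (fB n))) ∧
    -- antidominant `λ` (i.e. `x_1 ≤ x_2 ≤ ⋯ ≤ x_n ≤ 0`): `w_λ` is a negative braid
    ((∀ i j : Fin n, i ≤ j → lam i ≤ lam j) → (∀ i : Fin n, lam i ≤ 0) →
      wB n lam ∈ Submonoid.closure ({(omB n)⁻¹} ∪ Set.range (fun i : ZMod n => (fB n i)⁻¹))) := by
  refine ⟨fun hanti hpos => BrExt.wB_mem_closure_of_antitone (fun i j h => hanti i j h) hpos,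
    fun hmono hneg => ?_⟩
  have hinv := BrExt.wB_mem_closure_of_antitone (lam := -lam)
    (fun i j h => neg_le_neg (hmono i j h)) fun i => neg_nonneg.2 (hneg i)
  rw [BrExt.wB_neg, ← Submonoid.mem_closure_inv, Set.union_inv, Set.inv_singleton,
    Set.inv_range] at hinv
  exact hinv

theorem statement_9 (n : ℕ) (hn : 2 ≤ n) (lam : Fin n → ℤ) :
    -- dominant `λ` (i.e. `x_1 ≥ x_2 ≥ ⋯ ≥ x_n ≥ 0`): `w_λ` is a positive braid
    ((∀ i j : Fin n, i ≤ j → lam j ≤ lam i) → (∀ i : Fin n, 0 ≤ lam i) →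
      wB n lam ∈ Submonoid.closure ({omB n} ∪ Set.range (fB n))) ∧
    -- antidominant `λ` (i.e. `x_1 ≤ x_2 ≤ ⋯ ≤ x_n ≤ 0`): `w_λ` is a negative braid
    ((∀ i j : Fin n, i ≤ j → lam i ≤ lam j) → (∀ i : Fin n, lam i ≤ 0) →
      wB n lam ∈ Submonoid.closure ({(omB n)⁻¹} ∪ Set.range (fun i : ZMod n => (fB n i)⁻¹))) :=
  statement_9_general n lam
end

section
/- Suppose a δ-pseudocomplex X of A-modules has, in four consecutive degrees, the form A → B ⊕ F → C ⊕ F' → D with differential components a : A → B, b : A → F, c : B → C, d : B → F', e : F → C, φ : F → F', f : C → D, g : F' → D, where φ is an isomorphism of A-modules. Let Y agree with X outside these degrees and in these degrees be A → B → C → D with differentials a, c − e∘φ^{−1}∘d, and f. Then: (i) Y is again a δ-pseudocomplex; (ii) the degreewise maps α : X → Y (identity outside the indicated degrees, (id_B, 0) on B⊕F, and (id_C, −e∘φ^{−1}) on C⊕F') and β : Y → X (identity outside, (id_B, −φ^{−1}∘d)ᵗ, and (id_C, 0)ᵗ) are pseudochain maps; (iii) α∘β = id_Y, and id_X − β∘α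 = d_X∘q + q∘d_X, where q : X → X of homological degree −1 is φ^{−1} : F' → F on the indicated summands and zero otherwise. -/
/-!
STATEMENT 13 (Gaussian elimination for δ-pseudocomplexes of `A`-modules).
A δ-pseudocomplex `X` of `A`-modules (formalized in the category `ModuleCat A`,
where `B ⊞ F` is the product/direct sum of modules) which, in the four consecutive
degrees `0, 1, 2, 3`, has the form `A₀ ⟶ B ⊞ F ⟶ C ⊞ F' ⟶ D` (with `A₀ = V 0`,
`D = V 3`, and with arbitrary modules `V i` and differentials `dV i` elsewhere),
with differential components `a, b, c, dm, e, φ, f, g`, where `φ` is an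
isomorphism of `A`-modules.
-/

open CategoryTheory CategoryTheory.Limits

universe v u

variable {𝒜 : Type u} [Category.{v} 𝒜] [Preadditive 𝒜] [HasBinaryBiproducts 𝒜]

/-- A ℤ-indexed family of objects with degree-one maps (a complex without the
condition `d² = 0`). -/
structure PreCx (𝒜 : Type u) [Category.{v} 𝒜] [Preadditive 𝒜] : Type (max u v) where
  obj : ℤ → 𝒜
  d : ∀ i : ℤ, obj i ⟶ obj (i + 1)

/-- `X` is a cochain complex: `d² = 0`. -/
def PreCx.IsComplex (X : PreCx 𝒜) : Prop := ∀ i, X.d i ≫ X.d (i + 1) = 0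

/-- `α` is a chain map from `X` to `Y`. -/
def PreCx.IsChainMap (X Y : PreCx 𝒜) (α : ∀ i, X.obj i ⟶ Y.obj i) : Prop :=
  ∀ i, X.d i ≫ α (i + 1) = α i ≫ Y.d i

/-- The objects of the complex `X`: `B ⊞ F` in degree 1, `C ⊞ F'` in degree 2,
arbitrary objects (`V i`, with `A = V 0` and `D = V 3`) elsewhere. -/
noncomputable def wObjX (V : ℤ → 𝒜) (B F C F' : 𝒜) (i : ℤ) : 𝒜 :=
  if i = 1 then B ⊞ F else if i = 2 then C ⊞ F' else V i

/-- The differential of `X`: `(a, b)ᵗ` in degree 0; the matrix `(c, dm; e, φ)`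
in degree 1; `(f, g)` in degree 2; arbitrary (`dV`) elsewhere. -/
noncomputable def wdX (V : ℤ → 𝒜) (dV : ∀ i, V i ⟶ V (i + 1)) (B F C F' : 𝒜)
    (a : V 0 ⟶ B) (b : V 0 ⟶ F) (c : B ⟶ C) (dm : B ⟶ F') (e : F ⟶ C)
    (φ : F ⟶ F') (f : C ⟶ V 3) (g : F' ⟶ V 3) (i : ℤ) :
    wObjX V B F C F' i ⟶ wObjX V B F C F' (i + 1) :=
  if h0 : i = 0 then
    eqToHom (by subst h0; rfl) ≫ biprod.lift a b ≫ eqToHom (by subst h0; rfl)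
  else if h1 : i = 1 then
    eqToHom (by subst h1; rfl) ≫
      biprod.lift (biprod.desc c e) (biprod.desc dm φ) ≫ eqToHom (by subst h1; rfl)
  else if h2 : i = 2 then
    eqToHom (by subst h2; rfl) ≫ biprod.desc f g ≫ eqToHom (by subst h2; rfl)
  else
    eqToHom (by unfold wObjX; rw [if_neg h1, if_neg h2]) ≫ dV i ≫
      eqToHom (by unfold wObjX; rw [if_neg (by omega : ¬(i + 1 = 1)), if_neg (by omega : ¬(i + 1 = 2))])

/-- The complex `X`. -/
noncomputable def Xcx (V : ℤ → 𝒜) (dV : ∀ i, V i ⟶ V (i + 1)) (B F C F' : 𝒜)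
    (a : V 0 ⟶ B) (b : V 0 ⟶ F) (c : B ⟶ C) (dm : B ⟶ F') (e : F ⟶ C)
    (φ : F ⟶ F') (f : C ⟶ V 3) (g : F' ⟶ V 3) : PreCx 𝒜 :=
  ⟨wObjX V B F C F', wdX V dV B F C F' a b c dm e φ f g⟩

/-- The objects of the reduced complex `Y`: `B` in degree 1, `C` in degree 2,
agreeing with `X` elsewhere. -/
noncomputable def wObjY (V : ℤ → 𝒜) (B C : 𝒜) (i : ℤ) : 𝒜 :=
  if i = 1 then B else if i = 2 then C else V i

/-- The differential of `Y`: `a` in degree 0, `c − e ∘ φ⁻¹ ∘ dm` in degree 1,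
`f` in degree 2, agreeing with `X` elsewhere. -/
noncomputable def wdY (V : ℤ → 𝒜) (dV : ∀ i, V i ⟶ V (i + 1)) (B F C F' : 𝒜)
    (a : V 0 ⟶ B) (c : B ⟶ C) (dm : B ⟶ F') (e : F ⟶ C)
    (φ : F ⟶ F') [IsIso φ] (f : C ⟶ V 3) (i : ℤ) :
    wObjY V B C i ⟶ wObjY V B C (i + 1) :=
  if h0 : i = 0 then
    eqToHom (by subst h0; rfl) ≫ a ≫ eqToHom (by subst h0; rfl)
  else if h1 : i = 1 then
    eqToHom (by subst h1; rfl) ≫ (c - dm ≫ inv φ ≫ e) ≫ eqToHom (by subst h1; rfl)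
  else if h2 : i = 2 then
    eqToHom (by subst h2; rfl) ≫ f ≫ eqToHom (by subst h2; rfl)
  else
    eqToHom (by unfold wObjY; rw [if_neg h1, if_neg h2]) ≫ dV i ≫
      eqToHom (by unfold wObjY; rw [if_neg (by omega : ¬(i + 1 = 1)), if_neg (by omega : ¬(i + 1 = 2))])

/-- The complex `Y`. -/
noncomputable def Ycx (V : ℤ → 𝒜) (dV : ∀ i, V i ⟶ V (i + 1)) (B F C F' : 𝒜)
    (a : V 0 ⟶ B) (c : B ⟶ C) (dm : B ⟶ F') (e : F ⟶ C)
    (φ : F ⟶ F') [IsIso φ] (f : C ⟶ V 3) : PreCx 𝒜 :=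
  ⟨wObjY V B C, wdY V dV B F C F' a c dm e φ f⟩

/-- The chain map `α : X ⟶ Y`: the identity outside the indicated degrees,
`(id_B, 0)` in degree 1, and `(id_C, −e ∘ φ⁻¹)` in degree 2. -/
noncomputable def αmap (V : ℤ → 𝒜) (B F C F' : 𝒜) (e : F ⟶ C) (φ : F ⟶ F') [IsIso φ]
    (i : ℤ) : wObjX V B F C F' i ⟶ wObjY V B C i :=
  if h1 : i = 1 then
    eqToHom (by subst h1; rfl) ≫ biprod.fst ≫ eqToHom (by subst h1; rfl)
  else if h2 : i = 2 then
    eqToHom (by subst h2; rfl) ≫ biprod.desc (𝟙 C) (-(inv φ ≫ e)) ≫ eqToHom (by subst h2; rfl)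
  else
    eqToHom (by unfold wObjX wObjY; simp only [if_neg h1, if_neg h2])

/-- The chain map `β : Y ⟶ X`: the identity outside the indicated degrees,
`(id_B, −φ⁻¹ ∘ dm)ᵗ` in degree 1, and `(id_C, 0)ᵗ` in degree 2. -/
noncomputable def βmap (V : ℤ → 𝒜) (B F C F' : 𝒜) (dm : B ⟶ F') (φ : F ⟶ F') [IsIso φ]
    (i : ℤ) : wObjY V B C i ⟶ wObjX V B F C F' i :=
  if h1 : i = 1 then
    eqToHom (by subst h1; rfl) ≫ biprod.lift (𝟙 B) (-(dm ≫ inv φ)) ≫ eqToHom (by subst h1; rfl)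
  else if h2 : i = 2 then
    eqToHom (by subst h2; rfl) ≫ biprod.lift (𝟙 C) 0 ≫ eqToHom (by subst h2; rfl)
  else
    eqToHom (by unfold wObjX wObjY; simp only [if_neg h1, if_neg h2])

/-- The homotopy `q` (of homological degree `−1`): `φ⁻¹ : F' ⟶ F` on the indicated
summands (from degree 2 to degree 1) and zero otherwise. -/
noncomputable def qmap (V : ℤ → 𝒜) (B F C F' : 𝒜) (φ : F ⟶ F') [IsIso φ] (i : ℤ) :
    wObjX V B F C F' (i + 1) ⟶ wObjX V B F C F' i :=
  if h1 : i = 1 then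
    eqToHom (by subst h1; rfl) ≫
      biprod.lift (0 : C ⊞ F' ⟶ B) (biprod.desc (0 : C ⟶ F) (inv φ)) ≫
      eqToHom (by subst h1; rfl)
  else 0

/-- `X` is a δ-pseudocomplex: for each `i` there is `μ` with `d ∘ d = δ • μ`. -/
def PreCx.IsPseudo {A : Type u} [CommRing A] (δ : A) (X : PreCx (ModuleCat.{u} A)) : Prop :=
  ∀ i, ∃ μ : X.obj i ⟶ X.obj (i + 1 + 1), X.d i ≫ X.d (i + 1) = δ • μ

/-- `α` is a pseudochain map from `X` to `Y`: for each `i` there is `ν` with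
`d_Y ∘ α − α ∘ d_X = δ • ν`. -/
def PreCx.IsPseudoChainMap {A : Type u} [CommRing A] (δ : A)
    (X Y : PreCx (ModuleCat.{u} A)) (α : ∀ i, X.obj i ⟶ Y.obj i) : Prop :=
  ∀ i, ∃ ν : X.obj i ⟶ Y.obj (i + 1), α i ≫ Y.d i - X.d i ≫ α (i + 1) = δ • ν

/-!
The maps `α`, `β`, `q` satisfy exact identities, with no `δ`-error:
`d_Y = α ∘ d_X ∘ β`, `α ∘ β = id`, `id − β ∘ α = d_X q + q d_X`, `α ∘ d_X ∘ q = 0` and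
`q ∘ d_X ∘ β = 0`; each is a matrix computation in degrees `0, 1, 2`. Substituting them,
each of `d_Y ∘ d_Y`, `d_Y ∘ α − α ∘ d_X` and `d_X ∘ β − β ∘ d_Y` becomes a sum of terms
containing a factor `d_X ∘ d_X`, which is divisible by `δ`.
-/

section SMulDvd

variable {R : Type*} [Semiring R] {C : Type*} [Category C] [Preadditive C] [Linear R C]

def SMulDvd (δ : R) {X Y : C} (h : X ⟶ Y) : Prop := ∃ μ : X ⟶ Y, h = δ • μ

variable {δ : R} {X Y Z W : C}

lemma SMulDvd.sub {h k : X ⟶ Y} (hh : SMulDvd δ h) (hk : SMulDvd δ k) : SMulDvd δ (h - k) := by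
  obtain ⟨μ, rfl⟩ := hh
  obtain ⟨ν, rfl⟩ := hk
  exact ⟨μ - ν, (smul_sub δ μ ν).symm⟩

lemma SMulDvd.neg {h : X ⟶ Y} (hh : SMulDvd δ h) : SMulDvd δ (-h) := by
  obtain ⟨μ, rfl⟩ := hh
  exact ⟨-μ, (smul_neg δ μ).symm⟩

lemma SMulDvd.whisker {h : X ⟶ Y} (hh : SMulDvd δ h) (f : W ⟶ X) (g : Y ⟶ Z) :
    SMulDvd δ (f ≫ h ≫ g) := by
  obtain ⟨μ, rfl⟩ := hh
  exact ⟨f ≫ μ ≫ g, by simp⟩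

end SMulDvd

namespace PreCx

variable {A : Type u} [CommRing A] {δ : A} {X Y : PreCx (ModuleCat.{u} A)}
  {α : ∀ i, X.obj i ⟶ Y.obj i} {β : ∀ i, Y.obj i ⟶ X.obj i}
  {q : ∀ i, X.obj (i + 1) ⟶ X.obj i}

lemma IsPseudo.smulDvd_d_comp_d (hX : X.IsPseudo δ) (i : ℤ) :
    SMulDvd δ (X.d i ≫ X.d (i + 1)) :=
  hX i

lemma IsPseudo.of_retract (hX : X.IsPseudo δ) (hd : ∀ i, Y.d i = β i ≫ X.d i ≫ α (i + 1))
    (hq : ∀ i, 𝟙 _ - α (i + 1) ≫ β (i + 1) = X.d (i + 1) ≫ q (i + 1) + q i ≫ X.d i) :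
    Y.IsPseudo δ := by
  intro i
  have hαβ := (sub_eq_iff_comm.mp (hq i)).symm
  have key : Y.d i ≫ Y.d (i + 1) =
      β i ≫ (X.d i ≫ X.d (i + 1)) ≫ α (i + 1 + 1) -
        β i ≫ (X.d i ≫ X.d (i + 1)) ≫ q (i + 1) ≫ X.d (i + 1) ≫ α (i + 1 + 1) -
        (β i ≫ X.d i ≫ q i) ≫ (X.d i ≫ X.d (i + 1)) ≫ α (i + 1 + 1) := by
    simp only [hd, Category.assoc, reassoc_of% hαβ, Preadditive.sub_comp, Preadditive.comp_sub,
      Preadditive.add_comp, Preadditive.comp_add, Category.id_comp]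
    abel
  show SMulDvd δ _
  rw [key]
  have hdd := hX.smulDvd_d_comp_d i
  exact ((hdd.whisker _ _).sub (hdd.whisker _ _)).sub (hdd.whisker _ _)

lemma IsPseudo.isPseudoChainMap_retraction (hX : X.IsPseudo δ)
    (hd : ∀ i, Y.d i = β i ≫ X.d i ≫ α (i + 1))
    (hq : ∀ i, 𝟙 _ - α (i + 1) ≫ β (i + 1) = X.d (i + 1) ≫ q (i + 1) + q i ≫ X.d i)
    (hqdα : ∀ i, q i ≫ X.d i ≫ α (i + 1) = 0) :
    IsPseudoChainMap δ X Y α := by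
  intro i
  obtain ⟨j, rfl⟩ : ∃ j, i = j + 1 := ⟨i - 1, by ring⟩
  have hαβ := (sub_eq_iff_comm.mp (hq j)).symm
  have key : α (j + 1) ≫ Y.d (j + 1) - X.d (j + 1) ≫ α (j + 1 + 1) =
      -(q j ≫ (X.d j ≫ X.d (j + 1)) ≫ α (j + 1 + 1)) := by
    simp only [hd, Category.assoc, reassoc_of% hαβ, hqdα, Preadditive.sub_comp,
      Preadditive.add_comp, Category.id_comp, comp_zero]
    abel
  show SMulDvd δ _
  rw [key]
  exact ((hX.smulDvd_d_comp_d j).whisker _ _).neg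

lemma IsPseudo.isPseudoChainMap_section (hX : X.IsPseudo δ)
    (hd : ∀ i, Y.d i = β i ≫ X.d i ≫ α (i + 1))
    (hq : ∀ i, 𝟙 _ - α (i + 1) ≫ β (i + 1) = X.d (i + 1) ≫ q (i + 1) + q i ≫ X.d i)
    (hβdq : ∀ i, β i ≫ X.d i ≫ q i = 0) :
    IsPseudoChainMap δ Y X β := by
  intro i
  have key : β i ≫ X.d i - Y.d i ≫ β (i + 1) = β i ≫ (X.d i ≫ X.d (i + 1)) ≫ q (i + 1) := by
    have hαβ := (sub_eq_iff_comm.mp (hq i)).symm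
    simp only [hd, Category.assoc, hαβ, reassoc_of% (hβdq i), Preadditive.comp_sub,
      Preadditive.comp_add, Category.comp_id, zero_comp]
    abel
  show SMulDvd δ _
  rw [key]
  exact (hX.smulDvd_d_comp_d i).whisker _ _

end PreCx

lemma wObjY_of_ne {𝒞 : Type*} {V : ℤ → 𝒞} {B C : 𝒞} {i : ℤ} (h1 : i ≠ 1) (h2 : i ≠ 2) :
    wObjY V B C i = V i := by
  rw [wObjY, if_neg h1, if_neg h2]

section ReducedComplex

variable {𝒞 : Type*} [Category 𝒞] [Preadditive 𝒞] {V : ℤ → 𝒞} {dV : ∀ i, V i ⟶ V (i + 1)}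
  {B F C F' : 𝒞} {a : V 0 ⟶ B} {c : B ⟶ C} {dm : B ⟶ F'} {e : F ⟶ C} {φ : F ⟶ F'} [IsIso φ]
  {f : C ⟶ V 3} {i : ℤ}

lemma wdY_of_eq_zero (h : i = 0) : wdY V dV B F C F' a c dm e φ f i =
    eqToHom (by subst h; rfl) ≫ a ≫ eqToHom (by subst h; rfl) :=
  dif_pos h

lemma wdY_of_eq_one (h : i = 1) : wdY V dV B F C F' a c dm e φ f i =
    eqToHom (by subst h; rfl) ≫ (c - dm ≫ inv φ ≫ e) ≫ eqToHom (by subst h; rfl) := by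
  rw [wdY, dif_neg (by omega), dif_pos h]

lemma wdY_of_eq_two (h : i = 2) : wdY V dV B F C F' a c dm e φ f i =
    eqToHom (by subst h; rfl) ≫ f ≫ eqToHom (by subst h; rfl) := by
  rw [wdY, dif_neg (by omega), dif_neg (by omega), dif_pos h]

lemma wdY_of_ne (h0 : i ≠ 0) (h1 : i ≠ 1) (h2 : i ≠ 2) : wdY V dV B F C F' a c dm e φ f i =
    eqToHom (wObjY_of_ne h1 h2) ≫ dV i ≫ eqToHom (wObjY_of_ne (by omega) (by omega)).symm := by
  rw [wdY, dif_neg h0, dif_neg h1, dif_neg h2]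

end ReducedComplex

section Elimination

variable {V : ℤ → 𝒜} {dV : ∀ i, V i ⟶ V (i + 1)} {B F C F' : 𝒜}
  {a : V 0 ⟶ B} {b : V 0 ⟶ F} {c : B ⟶ C} {dm : B ⟶ F'} {e : F ⟶ C}
  {φ : F ⟶ F'} {f : C ⟶ V 3} {g : F' ⟶ V 3} {i : ℤ}

lemma wObjX_of_ne (h1 : i ≠ 1) (h2 : i ≠ 2) : wObjX V B F C F' i = V i := by
  rw [wObjX, if_neg h1, if_neg h2]

lemma wdX_of_eq_zero (h : i = 0) : wdX V dV B F C F' a b c dm e φ f g i =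
    eqToHom (by subst h; rfl) ≫ biprod.lift a b ≫ eqToHom (by subst h; rfl) :=
  dif_pos h

lemma wdX_of_eq_one (h : i = 1) : wdX V dV B F C F' a b c dm e φ f g i =
    eqToHom (by subst h; rfl) ≫ biprod.lift (biprod.desc c e) (biprod.desc dm φ) ≫
      eqToHom (by subst h; rfl) := by
  rw [wdX, dif_neg (by omega), dif_pos h]

lemma wdX_of_eq_two (h : i = 2) : wdX V dV B F C F' a b c dm e φ f g i =
    eqToHom (by subst h; rfl) ≫ biprod.desc f g ≫ eqToHom (by subst h; rfl) := by
  rw [wdX, dif_neg (by omega), dif_neg (by omega), dif_pos h]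

lemma wdX_of_ne (h0 : i ≠ 0) (h1 : i ≠ 1) (h2 : i ≠ 2) : wdX V dV B F C F' a b c dm e φ f g i =
    eqToHom (wObjX_of_ne h1 h2) ≫ dV i ≫ eqToHom (wObjX_of_ne (by omega) (by omega)).symm := by
  rw [wdX, dif_neg h0, dif_neg h1, dif_neg h2]

variable [IsIso φ]

lemma αmap_of_eq_one (h : i = 1) : αmap V B F C F' e φ i =
    eqToHom (by subst h; rfl) ≫ biprod.fst ≫ eqToHom (by subst h; rfl) :=
  dif_pos h

lemma αmap_of_eq_two (h : i = 2) : αmap V B F C F' e φ i =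
    eqToHom (by subst h; rfl) ≫ biprod.desc (𝟙 C) (-(inv φ ≫ e)) ≫ eqToHom (by subst h; rfl) := by
  rw [αmap, dif_neg (by omega), dif_pos h]

lemma αmap_of_ne (h1 : i ≠ 1) (h2 : i ≠ 2) : αmap V B F C F' e φ i =
    eqToHom ((wObjX_of_ne h1 h2).trans (wObjY_of_ne h1 h2).symm) := by
  rw [αmap, dif_neg h1, dif_neg h2]

lemma βmap_of_eq_one (h : i = 1) : βmap V B F C F' dm φ i =
    eqToHom (by subst h; rfl) ≫ biprod.lift (𝟙 B) (-(dm ≫ inv φ)) ≫ eqToHom (by subst h; rfl) :=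
  dif_pos h

lemma βmap_of_eq_two (h : i = 2) : βmap V B F C F' dm φ i =
    eqToHom (by subst h; rfl) ≫ biprod.lift (𝟙 C) 0 ≫ eqToHom (by subst h; rfl) := by
  rw [βmap, dif_neg (by omega), dif_pos h]

lemma βmap_of_ne (h1 : i ≠ 1) (h2 : i ≠ 2) : βmap V B F C F' dm φ i =
    eqToHom ((wObjY_of_ne h1 h2).trans (wObjX_of_ne h1 h2).symm) := by
  rw [βmap, dif_neg h1, dif_neg h2]

lemma qmap_of_eq_one (h : i = 1) : qmap V B F C F' φ i =
    eqToHom (by subst h; rfl) ≫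
      biprod.lift (0 : C ⊞ F' ⟶ B) (biprod.desc (0 : C ⟶ F) (inv φ)) ≫ eqToHom (by subst h; rfl) :=
  dif_pos h

lemma qmap_of_ne (h : i ≠ 1) : qmap V B F C F' φ i = 0 :=
  dif_neg h

lemma wdY_eq_βmap_comp_wdX_comp_αmap (i : ℤ) :
    wdY V dV B F C F' a c dm e φ f i =
      βmap V B F C F' dm φ i ≫ wdX V dV B F C F' a b c dm e φ f g i ≫
        αmap V B F C F' e φ (i + 1) := by
  by_cases h0 : i = 0
  · rw [wdY_of_eq_zero h0, βmap_of_ne (by omega) (by omega), wdX_of_eq_zero h0,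
      αmap_of_eq_one (by omega)]
    simp
  by_cases h1 : i = 1
  · rw [wdY_of_eq_one h1, βmap_of_eq_one h1, wdX_of_eq_one h1, αmap_of_eq_two (by omega)]
    simp [sub_eq_add_neg]
  by_cases h2 : i = 2
  · rw [wdY_of_eq_two h2, βmap_of_eq_two h2, wdX_of_eq_two h2, αmap_of_ne (by omega) (by omega)]
    simp
  rw [wdY_of_ne h0 h1 h2, βmap_of_ne h1 h2, wdX_of_ne h0 h1 h2, αmap_of_ne (by omega) (by omega)]
  simp

lemma βmap_comp_αmap (i : ℤ) :
    βmap V B F C F' dm φ i ≫ αmap V B F C F' e φ i = 𝟙 (wObjY V B C i) := by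
  by_cases h1 : i = 1
  · rw [βmap_of_eq_one h1, αmap_of_eq_one h1]
    simp
  by_cases h2 : i = 2
  · rw [βmap_of_eq_two h2, αmap_of_eq_two h2]
    simp
  rw [βmap_of_ne h1 h2, αmap_of_ne h1 h2]
  simp

lemma one_sub_αmap_comp_βmap (i : ℤ) :
    𝟙 (wObjX V B F C F' (i + 1)) - αmap V B F C F' e φ (i + 1) ≫ βmap V B F C F' dm φ (i + 1) =
      wdX V dV B F C F' a b c dm e φ f g (i + 1) ≫ qmap V B F C F' φ (i + 1) +
        qmap V B F C F' φ i ≫ wdX V dV B F C F' a b c dm e φ f g i := by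
  by_cases h0 : i = 0
  · have hobj : wObjX V B F C F' (i + 1) = (B ⊞ F) := by subst h0; rfl
    rw [← cancel_epi (eqToHom hobj.symm), ← cancel_mono (eqToHom hobj),
      αmap_of_eq_one (by omega), βmap_of_eq_one (by omega), wdX_of_eq_one (by omega),
      qmap_of_eq_one (by omega), qmap_of_ne (by omega)]
    simp only [Category.assoc, eqToHom_trans_assoc, eqToHom_refl]
    apply biprod.hom_ext' <;> apply biprod.hom_ext <;> simp
  by_cases h1 : i = 1
  · have hobj : wObjX V B F C F' (i + 1) = (C ⊞ F') := by subst h1; rfl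
    rw [← cancel_epi (eqToHom hobj.symm), ← cancel_mono (eqToHom hobj),
      αmap_of_eq_two (by omega), βmap_of_eq_two (by omega), qmap_of_ne (by omega),
      qmap_of_eq_one h1, wdX_of_eq_one h1]
    simp only [Category.assoc, eqToHom_trans_assoc, eqToHom_refl]
    apply biprod.hom_ext' <;> apply biprod.hom_ext <;> simp
  rw [αmap_of_ne (by omega) (by omega), βmap_of_ne (by omega) (by omega), qmap_of_ne (by omega),
    qmap_of_ne h1]
  simp

lemma qmap_comp_wdX_comp_αmap (i : ℤ) :
    qmap V B F C F' φ i ≫ wdX V dV B F C F' a b c dm e φ f g i ≫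
      αmap V B F C F' e φ (i + 1) = 0 := by
  by_cases h1 : i = 1
  · rw [qmap_of_eq_one h1, wdX_of_eq_one h1, αmap_of_eq_two (by omega)]
    simp
  rw [qmap_of_ne h1, zero_comp]

lemma βmap_comp_wdX_comp_qmap (i : ℤ) :
    βmap V B F C F' dm φ i ≫ wdX V dV B F C F' a b c dm e φ f g i ≫
      qmap V B F C F' φ i = 0 := by
  by_cases h1 : i = 1
  · have hzero : biprod.lift (𝟙 B) (-(dm ≫ inv φ)) ≫
        biprod.lift (biprod.desc c e) (biprod.desc dm φ) ≫
          biprod.lift (0 : C ⊞ F' ⟶ B) (biprod.desc (0 : C ⟶ F) (inv φ)) = 0 := by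
      apply biprod.hom_ext <;> simp
    rw [βmap_of_eq_one h1, wdX_of_eq_one h1, qmap_of_eq_one h1]
    simp [reassoc_of% hzero]
  rw [qmap_of_ne h1, comp_zero, comp_zero]

end Elimination

theorem statement_13 {A : Type u} [CommRing A] (δ : A)
    (V : ℤ → ModuleCat.{u} A) (dV : ∀ i, V i ⟶ V (i + 1)) (B F C F' : ModuleCat.{u} A)
    (a : V 0 ⟶ B) (b : V 0 ⟶ F) (c : B ⟶ C) (dm : B ⟶ F') (e : F ⟶ C)
    (φ : F ⟶ F') [IsIso φ] (f : C ⟶ V 3) (g : F' ⟶ V 3)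
    (hX : (Xcx V dV B F C F' a b c dm e φ f g).IsPseudo δ) :
    -- (i) `Y` is again a δ-pseudocomplex
    (Ycx V dV B F C F' a c dm e φ f).IsPseudo δ ∧
    -- (ii) `α` and `β` are pseudochain maps
    PreCx.IsPseudoChainMap δ (Xcx V dV B F C F' a b c dm e φ f g)
      (Ycx V dV B F C F' a c dm e φ f) (αmap V B F C F' e φ) ∧
    PreCx.IsPseudoChainMap δ (Ycx V dV B F C F' a c dm e φ f)
      (Xcx V dV B F C F' a b c dm e φ f g) (βmap V B F C F' dm φ) ∧
    -- (iii) `α ∘ β = id_Y` and `id_X − β ∘ α = d_X ∘ q + q ∘ d_X`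
    (∀ i, βmap V B F C F' dm φ i ≫ αmap V B F C F' e φ i = 𝟙 (wObjY V B C i)) ∧
    (∀ i, 𝟙 (wObjX V B F C F' (i + 1)) -
        αmap V B F C F' e φ (i + 1) ≫ βmap V B F C F' dm φ (i + 1) =
      wdX V dV B F C F' a b c dm e φ f g (i + 1) ≫ qmap V B F C F' φ (i + 1) +
        qmap V B F C F' φ i ≫ wdX V dV B F C F' a b c dm e φ f g i) := by
  exact ⟨hX.of_retract wdY_eq_βmap_comp_wdX_comp_αmap one_sub_αmap_comp_βmap,
    hX.isPseudoChainMap_retraction wdY_eq_βmap_comp_wdX_comp_αmap one_sub_αmap_comp_βmap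
      qmap_comp_wdX_comp_αmap,
    hX.isPseudoChainMap_section wdY_eq_βmap_comp_wdX_comp_αmap one_sub_αmap_comp_βmap
      βmap_comp_wdX_comp_qmap,
    βmap_comp_αmap, one_sub_αmap_comp_βmap⟩
end
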